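/- arXiv:1502.00400 — 3 statements merged into one kernel-verified Lean document; each statement's English description precedes it below -/
import Mathlib

section
/- Let S₁*, …, S_{m-1}* be fixed X-element subsets of a Y-element set and let S_m be a uniformly random X-element subset. For every integer r with 0 ≤ r ≤ X and r ≥ X + |⋃_{i<m} S_i*| - Y, the probability that |S_m ∩ (⋃_{i=1}^{m-1} S_i*)| = r is at most (1/r!)·(m X²/(Y - X))^r, provided Y > X and |⋃_{i<m} S_i*| ≤ (m-1)X. -/
/-!
A set `T` with `#(T ∩ A) = r` is determined by the pair `(T ∩ A, T \ A)`, so there are at most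
`C(#A, r) · C(Y, X - r)` of them. Here `C(#A, r) ≤ #A ^ r / r!`, and lowering the lower index of
`C(Y, ·)` by one from `j ≤ X` multiplies it by `j / (Y - j + 1) ≤ X / (Y - X)`, so
`C(Y, X - r) ≤ C(Y, X) · (X / (Y - X)) ^ r`. Finally `#A ≤ (m - 1) X ≤ m X`.
-/

open Finset

theorem card_filter_card_inter_eq_le {α : Type*} [DecidableEq α] (s A : Finset α) (k r : ℕ) :
    #{T ∈ powersetCard k s | #(T ∩ A) = r} ≤ (#A).choose r * (#(s \ A)).choose (k - r) := by
  rw [← card_powersetCard, ← card_powersetCard, ← card_product]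
  refine card_le_card_of_injOn (fun T => (T ∩ A, T \ A)) (fun T hT => ?_) (fun T _ T' _ h => ?_)
  · obtain ⟨hT, hTr⟩ := mem_filter.1 hT
    obtain ⟨hTs, hTk⟩ := mem_powersetCard.1 hT
    have hsplit := card_inter_add_card_sdiff T A
    simp only [mem_coe, mem_product, mem_powersetCard]
    exact ⟨⟨inter_subset_right, hTr⟩, sdiff_subset_sdiff hTs le_rfl, by omega⟩
  · obtain ⟨h₁, h₂⟩ := Prod.ext_iff.1 h
    rw [← sdiff_union_inter T A, ← sdiff_union_inter T' A]
    exact congrArg₂ (· ∪ ·) h₂ h₁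

theorem choose_sub_mul_pow_le (n : ℕ) {k r : ℕ} (hr : r ≤ k) :
    n.choose (k - r) * (n - k) ^ r ≤ n.choose k * k ^ r := by
  induction r with
  | zero => simp
  | succ r ih =>
    have hstep : n.choose (k - (r + 1)) * (n - k) ≤ n.choose (k - r) * k := by
      have hpascal := Nat.choose_succ_right_eq n (k - (r + 1))
      rw [show k - (r + 1) + 1 = k - r by omega] at hpascal
      calc n.choose (k - (r + 1)) * (n - k)
          ≤ n.choose (k - (r + 1)) * (n - (k - (r + 1))) := by gcongr; omega
        _ = n.choose (k - r) * (k - r) := by rw [hpascal]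
        _ ≤ n.choose (k - r) * k := by gcongr; omega
    calc n.choose (k - (r + 1)) * (n - k) ^ (r + 1)
        = n.choose (k - (r + 1)) * (n - k) * (n - k) ^ r := by ring
      _ ≤ n.choose (k - r) * k * (n - k) ^ r := by gcongr
      _ = k * (n.choose (k - r) * (n - k) ^ r) := by ring
      _ ≤ k * (n.choose k * k ^ r) := Nat.mul_le_mul_left _ (ih (by omega))
      _ = n.choose k * k ^ (r + 1) := by ring

theorem choose_sub_le_choose_mul_div_pow {n k : ℕ} (hk : k < n) {r : ℕ} (hr : r ≤ k) :
    (n.choose (k - r) : ℝ) ≤ n.choose k * ((k : ℝ) / (n - k)) ^ r := by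
  have hnk : (0 : ℝ) < n - k := by simp [hk]
  rw [div_pow, mul_div_assoc', le_div_iff₀ (by positivity), ← Nat.cast_sub hk.le]
  exact_mod_cast choose_sub_mul_pow_le n hr

theorem card_filter_card_inter_eq_div_le {α : Type*} [Fintype α] [DecidableEq α] (A : Finset α)
    {k r : ℕ} (hk : k < Fintype.card α) (hr : r ≤ k) :
    (#{T ∈ powersetCard k univ | #(T ∩ A) = r} : ℝ) / (Fintype.card α).choose k
      ≤ 1 / r.factorial * ((#A * k : ℝ) / (Fintype.card α - k)) ^ r := by
  set n := Fintype.card α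
  have hchoose : (0 : ℝ) < n.choose k := by exact_mod_cast Nat.choose_pos hk.le
  have hcount : (#{T ∈ powersetCard k univ | #(T ∩ A) = r} : ℝ)
      ≤ (#A).choose r * n.choose (k - r) := by
    have h := card_filter_card_inter_eq_le univ A k r
    rw [card_univ_sdiff] at h
    exact_mod_cast h.trans (Nat.mul_le_mul_left _ (Nat.choose_le_choose _ (Nat.sub_le n #A)))
  rw [div_le_iff₀ hchoose]
  calc (#{T ∈ powersetCard k univ | #(T ∩ A) = r} : ℝ)
      ≤ (#A).choose r * n.choose (k - r) := hcount
    _ ≤ (#A : ℝ) ^ r / r.factorial * (n.choose k * ((k : ℝ) / (n - k)) ^ r) := by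
        gcongr
        · exact Nat.choose_le_pow_div r #A
        · exact choose_sub_le_choose_mul_div_pow hk hr
    _ = 1 / r.factorial * ((#A * k : ℝ) / (n - k)) ^ r * n.choose k := by ring

open scoped Classical in
theorem stmt3_general (X Y m r : ℕ) (hXY : X < Y)
    (S : Fin (m - 1) → Finset (Fin Y)) (hS : ∀ i, (S i).card = X)
    (hr1 : r ≤ X) :
    let Ω := Finset.powersetCard X (Finset.univ : Finset (Fin Y))
    let A := Finset.univ.biUnion S
    ((Ω.filter (fun T => (T ∩ A).card = r)).card : ℝ) / (Ω.card : ℝ)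
      ≤ (1 / (Nat.factorial r : ℝ)) * ((m * X ^ 2 : ℝ) / ((Y : ℝ) - X)) ^ r := by
  intro Ω A
  have hA : #A ≤ m * X := by
    refine (card_biUnion_le_card_mul _ _ _ fun i _ => (hS i).le).trans ?_
    simp only [card_univ, Fintype.card_fin]
    gcongr
    exact m.sub_le 1
  have hAX : (#A * X : ℝ) ≤ m * X ^ 2 := by
    rw [sq, ← mul_assoc]
    gcongr
    exact_mod_cast hA
  have hYX : (0 : ℝ) < Y - X := by simp [hXY]
  calc _ ≤ 1 / r.factorial * ((#A * X : ℝ) / (Y - X)) ^ r := by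
        simpa [Ω, card_powersetCard] using
          card_filter_card_inter_eq_div_le A (by simpa using hXY) hr1
    _ ≤ _ := by gcongr

open scoped Classical in
/-- Hypergeometric-type bound: for fixed `X`-subsets `S₁*,…,S_{m-1}*` with union `A`
and a uniform random `X`-subset `S_m`,
`P[|S_m ∩ A| = r] ≤ (1/r!)·(m X²/(Y-X))^r`. -/
theorem stmt3 (X Y m r : ℕ) (hm : 2 ≤ m) (hXY : X < Y)
    (S : Fin (m - 1) → Finset (Fin Y)) (hS : ∀ i, (S i).card = X)
    (hr1 : r ≤ X) (hr2 : X + (Finset.univ.biUnion S).card ≤ Y + r) :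
    let Ω := Finset.powersetCard X (Finset.univ : Finset (Fin Y))
    let A := Finset.univ.biUnion S
    ((Ω.filter (fun T => (T ∩ A).card = r)).card : ℝ) / (Ω.card : ℝ)
      ≤ (1 / (Nat.factorial r : ℝ)) * ((m * X ^ 2 : ℝ) / ((Y : ℝ) - X)) ^ r :=
  stmt3_general X Y m r hXY S hS hr1
end

section
/- Fix X-subsets S₁*, …, S_m* of a Y-element pool and let S_w be an independent uniformly random X-subset. Then P[S_w ∩ (⋃_{i=1}^m S_i*) = ∅] = C(Y - |⋃_{i=1}^m S_i*|, X)/C(Y, X), and this is at most exp(-(q/X)·|⋃_{i=1}^m S_i*|), where q = 1 - C(Y-X,X)/C(Y,X), assuming Y ≥ 2X. -/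
/-!
The `X`-subsets avoiding `A` are exactly the `X`-subsets of its complement, which gives the
equality. For the bound, shrinking the pool from `j + 1 ≤ Y` to `j` elements multiplies `C(j + 1, X)`
by `1 - X/(j + 1) ≤ 1 - X/Y`, so with `s = |A|` the probability is at most
`(1 - X/Y)^s ≤ exp(-(X/Y)·s)`. Finally `q ≤ X²/Y`: telescoping Pascal's rule gives
`C(Y, X) - C(Y - X, X) ≤ X·C(Y - 1, X - 1) = (X²/Y)·C(Y, X)`.
-/

open Finset

theorem Finset.filter_powersetCard_inter_eq_empty {α : Type*} [Fintype α] [DecidableEq α]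
    (k : ℕ) (A : Finset α) :
    (powersetCard k univ).filter (fun T => T ∩ A = ∅) = powersetCard k Aᶜ := by
  ext T
  simp only [mem_filter, mem_powersetCard, subset_univ, true_and, subset_compl_iff_disjoint_right,
    disjoint_iff_inter_eq_empty]
  tauto

theorem Nat.choose_le_choose_sub_add_mul (n r j : ℕ) :
    (n + 1).choose (r + 1) ≤ (n + 1 - j).choose (r + 1) + j * n.choose r := by
  induction j with
  | zero => simp
  | succ j ih =>
    have hstep : (n + 1 - j).choose (r + 1) ≤ (n + 1 - (j + 1)).choose (r + 1) + n.choose r := by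
      rcases Nat.lt_or_ge n j with hnj | hjn
      · simp [Nat.sub_eq_zero_of_le (by omega : n + 1 ≤ j)]
      · obtain ⟨i, hi⟩ : ∃ i, n + 1 - j = i + 1 := ⟨n - j, by omega⟩
        rw [hi, Nat.choose_succ_succ', show n + 1 - (j + 1) = i by omega, add_comm]
        exact Nat.add_le_add_left (Nat.choose_le_choose r (by omega)) _
    linarith

theorem one_sub_choose_sub_div_choose_div_le {n k : ℕ} (hk : k ≤ n) :
    (1 - ((n - k).choose k : ℝ) / n.choose k) / k ≤ k / n := by
  rcases Nat.eq_zero_or_pos k with rfl | hk0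
  · simp
  obtain ⟨r, rfl⟩ : ∃ r, k = r + 1 := ⟨k - 1, by omega⟩
  obtain ⟨m, rfl⟩ : ∃ m, n = m + 1 := ⟨n - 1, by omega⟩
  have hpos : (0 : ℝ) < (m + 1).choose (r + 1) := by exact_mod_cast Nat.choose_pos hk
  have htele : ((m + 1).choose (r + 1) : ℝ) ≤ (m - r).choose (r + 1) + (r + 1) * m.choose r := by
    have := Nat.choose_le_choose_sub_add_mul m r (r + 1)
    rw [Nat.add_sub_add_right] at this
    exact_mod_cast this
  have habs : ((m + 1 : ℕ) : ℝ) * m.choose r = (m + 1).choose (r + 1) * (r + 1 : ℕ) := by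
    exact_mod_cast Nat.add_one_mul_choose_eq m r
  rw [div_le_div_iff₀ (by positivity) (by positivity), one_sub_div hpos.ne', div_mul_eq_mul_div,
    div_le_iff₀ hpos]
  push_cast at habs ⊢
  nlinarith [mul_le_mul_of_nonneg_right htele (by positivity : (0 : ℝ) ≤ m + 1)]

theorem Nat.choose_le_choose_succ_mul_one_sub_div {m n : ℕ} (k : ℕ) (hm : m + 1 ≤ n) :
    (m.choose k : ℝ) ≤ (m + 1).choose k * (1 - k / n) := by
  rcases Nat.lt_or_ge (m + 1) k with hmk | hkm
  · simp [Nat.choose_eq_zero_of_lt hmk, Nat.choose_eq_zero_of_lt (by omega : m < k)]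
  have hid : (m.choose k : ℝ) * (m + 1) = (m + 1).choose k * (m + 1 - k) := by
    have := Nat.choose_mul_succ_eq m k
    rw [← Nat.cast_inj (R := ℝ)] at this
    push_cast [hkm] at this
    exact this
  have hmn : (m + 1 : ℝ) ≤ n := by exact_mod_cast hm
  have hc : (m.choose k : ℝ) = (m + 1).choose k * (1 - k / (m + 1)) := by
    field_simp
    linarith
  rw [hc]
  gcongr

theorem Nat.choose_le_choose_add_mul_one_sub_div_pow {m n k s : ℕ} (hk : k ≤ n)
    (hms : m + s ≤ n) : (m.choose k : ℝ) ≤ (m + s).choose k * (1 - k / n) ^ s := by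
  have hr : 0 ≤ 1 - (k : ℝ) / n :=
    sub_nonneg.2 (div_le_one_of_le₀ (by exact_mod_cast hk) (Nat.cast_nonneg _))
  induction s generalizing m with
  | zero => simp
  | succ s ih =>
    calc (m.choose k : ℝ) ≤ (m + 1).choose k * (1 - k / n) :=
          Nat.choose_le_choose_succ_mul_one_sub_div k (by omega)
      _ ≤ (m + 1 + s).choose k * (1 - k / n) ^ s * (1 - k / n) :=
          mul_le_mul_of_nonneg_right (ih (by omega)) hr
      _ = (m + (s + 1)).choose k * (1 - k / n) ^ (s + 1) := by
          rw [pow_succ, ← mul_assoc, add_right_comm, add_assoc]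

theorem choose_sub_div_choose_le_exp {n k s : ℕ} (hk : k ≤ n) (hs : s ≤ n) :
    ((n - s).choose k : ℝ) / n.choose k ≤ Real.exp (-(k / n) * s) := by
  have hpos : (0 : ℝ) < n.choose k := by exact_mod_cast Nat.choose_pos hk
  calc ((n - s).choose k : ℝ) / n.choose k ≤ (1 - k / n) ^ s := by
        rw [div_le_iff₀' hpos]
        simpa [Nat.sub_add_cancel hs] using
          Nat.choose_le_choose_add_mul_one_sub_div_pow hk (m := n - s) (s := s) (by omega)
    _ ≤ Real.exp (-(k / n)) ^ s := by
        gcongr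
        · exact sub_nonneg.2 (div_le_one_of_le₀ (by exact_mod_cast hk) (Nat.cast_nonneg _))
        · exact Real.one_sub_le_exp_neg _
    _ = Real.exp (-(k / n) * s) := by rw [← Real.exp_nat_mul]; ring_nf

open scoped Classical in
theorem stmt6_general (X Y m : ℕ) (hY : 2 * X ≤ Y)
    (S : Fin m → Finset (Fin Y)) :
    let Ω := Finset.powersetCard X (Finset.univ : Finset (Fin Y))
    let A := Finset.univ.biUnion S
    let q : ℝ := 1 - ((Y - X).choose X : ℝ) / (Y.choose X : ℝ)
    ((Ω.filter (fun T => T ∩ A = ∅)).card : ℝ) / (Ω.card : ℝ)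
        = ((Y - A.card).choose X : ℝ) / (Y.choose X : ℝ) ∧
    ((Ω.filter (fun T => T ∩ A = ∅)).card : ℝ) / (Ω.card : ℝ)
        ≤ Real.exp (-(q / X) * A.card) := by
  intro Ω A q
  have hprob : ((Ω.filter (fun T => T ∩ A = ∅)).card : ℝ) / (Ω.card : ℝ)
      = ((Y - A.card).choose X : ℝ) / (Y.choose X : ℝ) := by
    simp only [Ω, filter_powersetCard_inter_eq_empty, card_powersetCard, card_compl, card_univ,
      Fintype.card_fin]
  refine ⟨hprob, hprob ▸ ?_⟩
  calc ((Y - A.card).choose X : ℝ) / (Y.choose X : ℝ) ≤ Real.exp (-(X / Y) * A.card) :=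
        choose_sub_div_choose_le_exp (by omega) (by simpa using card_le_univ A)
    _ ≤ Real.exp (-(q / X) * A.card) := by
        have hqX : q / X ≤ X / Y := one_sub_choose_sub_div_choose_div_le (by omega)
        gcongr

open scoped Classical in
/-- For fixed `X`-subsets with union `A` (with `|A| ≤ Y - X`) and uniform random
`X`-subset `S_w`: `P[S_w ∩ A = ∅] = C(Y-|A|,X)/C(Y,X) ≤ exp(-(q/X)·|A|)`. -/
theorem stmt6 (X Y m : ℕ) (hY : 2 * X ≤ Y) (hm : 1 ≤ m)
    (S : Fin m → Finset (Fin Y)) (hS : ∀ i, (S i).card = X)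
    (hA : (Finset.univ.biUnion S).card ≤ Y - X) :
    let Ω := Finset.powersetCard X (Finset.univ : Finset (Fin Y))
    let A := Finset.univ.biUnion S
    let q : ℝ := 1 - ((Y - X).choose X : ℝ) / (Y.choose X : ℝ)
    ((Ω.filter (fun T => T ∩ A = ∅)).card : ℝ) / (Ω.card : ℝ)
        = ((Y - A.card).choose X : ℝ) / (Y.choose X : ℝ) ∧
    ((Ω.filter (fun T => T ∩ A = ∅)).card : ℝ) / (Ω.card : ℝ)
        ≤ Real.exp (-(q / X) * A.card) :=
  stmt6_general X Y m hY S
end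

section
/- Let w be a node with a uniformly random X-subset key ring and let S₁*, …, S_m* be fixed pairwise disjoint X-subsets of a Y-element pool with mX ≤ Y - X. Then the conditional probability that w is adjacent to none of the m nodes holding these key rings, namely C(Y - mX, X)/C(Y, X), is at most (1 - q)^m ≤ e^{-mq}, where q = 1 - C(Y - X, X)/C(Y, X). -/
lemma stmt13_key (X n Y : ℕ) (h2 : 2 * X ≤ n) (hnY : n ≤ Y) :
    (n - X).choose X * Y.choose X ≤ n.choose X * (Y - X).choose X := by
  have hd : (n - X).descFactorial X * Y.descFactorial X ≤
      n.descFactorial X * (Y - X).descFactorial X := by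
    rw [Nat.descFactorial_eq_prod_range, Nat.descFactorial_eq_prod_range,
      Nat.descFactorial_eq_prod_range, Nat.descFactorial_eq_prod_range,
      ← Finset.prod_mul_distrib, ← Finset.prod_mul_distrib]
    apply Finset.prod_le_prod'
    intro i hi
    have hiX : i < X := Finset.mem_range.mp hi
    have h1 : X ≤ n := by omega
    have h3 : i ≤ n - X := by omega
    have h4 : i ≤ n := by omega
    have h5 : X ≤ Y := by omega
    have h6 : i ≤ Y - X := by omega
    have h7 : i ≤ Y := by omega
    zify [h1, h3, h4, h5, h6, h7]
    nlinarith [hnY, hiX]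
  rw [Nat.descFactorial_eq_factorial_mul_choose, Nat.descFactorial_eq_factorial_mul_choose,
    Nat.descFactorial_eq_factorial_mul_choose, Nat.descFactorial_eq_factorial_mul_choose] at hd
  refine Nat.le_of_mul_le_mul_left ?_ (Nat.mul_pos X.factorial_pos X.factorial_pos)
  calc X.factorial * X.factorial * ((n - X).choose X * Y.choose X)
      = X.factorial * (n - X).choose X * (X.factorial * Y.choose X) := by ring
    _ ≤ X.factorial * n.choose X * (X.factorial * (Y - X).choose X) := hd
    _ = X.factorial * X.factorial * (n.choose X * (Y - X).choose X) := by ring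

lemma stmt13_step (X Y : ℕ) (hX : 1 ≤ X) : ∀ m, 1 ≤ m → (m + 1) * X ≤ Y →
    ((Y - m * X).choose X : ℝ) / (Y.choose X : ℝ) ≤
      (((Y - X).choose X : ℝ) / (Y.choose X : ℝ)) ^ m := by
  intro m
  induction m with
  | zero => omega
  | succ k ih =>
    intro _ hY
    rcases Nat.eq_or_lt_of_le (show 1 ≤ k + 1 by omega) with h1 | h1
    · simp [← h1]
    · have hk : 1 ≤ k := by omega
      have hYk : (k + 1) * X ≤ Y := by nlinarith
      have hC : (0 : ℝ) < (Y.choose X : ℝ) := by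
        exact_mod_cast Nat.choose_pos (by nlinarith : X ≤ Y)
      have e1 : (k + 1 + 1) * X = k * X + 2 * X := by ring
      have e2 : (k + 1) * X = k * X + X := by ring
      have hkey := stmt13_key X (Y - k * X) Y (by omega) (by omega)
      rw [show Y - k * X - X = Y - (k + 1) * X by omega] at hkey
      have hkeyR : ((Y - (k + 1) * X).choose X : ℝ) * (Y.choose X : ℝ) ≤
          ((Y - k * X).choose X : ℝ) * ((Y - X).choose X : ℝ) := by exact_mod_cast hkey
      have ih' := ih hk hYk
      have hr0 : (0 : ℝ) ≤ ((Y - X).choose X : ℝ) / (Y.choose X : ℝ) :=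
        div_nonneg (Nat.cast_nonneg _) hC.le
      have step1 : ((Y - (k + 1) * X).choose X : ℝ) / (Y.choose X : ℝ) ≤
          (((Y - k * X).choose X : ℝ) / (Y.choose X : ℝ)) *
          (((Y - X).choose X : ℝ) / (Y.choose X : ℝ)) := by
        rw [div_mul_div_comm, div_le_div_iff₀ hC (mul_pos hC hC)]
        nlinarith [hkeyR, hC.le]
      calc ((Y - (k + 1) * X).choose X : ℝ) / (Y.choose X : ℝ) ≤ _ := step1
        _ ≤ (((Y - X).choose X : ℝ) / (Y.choose X : ℝ)) ^ k *
            (((Y - X).choose X : ℝ) / (Y.choose X : ℝ)) :=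
          mul_le_mul_of_nonneg_right ih' hr0
        _ = (((Y - X).choose X : ℝ) / (Y.choose X : ℝ)) ^ (k + 1) := (pow_succ _ _).symm

/-- For pairwise disjoint fixed key rings (so the union has size `mX`),
`C(Y-mX,X)/C(Y,X) ≤ (1-q)^m ≤ e^{-mq}` where `q = 1 - C(Y-X,X)/C(Y,X)`. -/
theorem stmt13 (X Y m : ℕ) (hX : 1 ≤ X) (hm : 1 ≤ m) (hY : (m + 1) * X ≤ Y) :
    let q : ℝ := 1 - ((Y - X).choose X : ℝ) / (Y.choose X : ℝ)
    ((Y - m * X).choose X : ℝ) / (Y.choose X : ℝ) ≤ (1 - q) ^ m ∧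
    (1 - q) ^ m ≤ Real.exp (-(m : ℝ) * q) := by
  intro q
  have hq : 1 - q = ((Y - X).choose X : ℝ) / (Y.choose X : ℝ) := by simp [q]
  have hC : (0 : ℝ) < (Y.choose X : ℝ) := by
    exact_mod_cast Nat.choose_pos (by nlinarith : X ≤ Y)
  have hr0 : (0 : ℝ) ≤ 1 - q := by rw [hq]; positivity
  constructor
  · rw [hq]; exact stmt13_step X Y hX m hm hY
  · have h1 : 1 - q ≤ Real.exp (-q) := by
      have := Real.add_one_le_exp (-q); linarith
    calc (1 - q) ^ m ≤ Real.exp (-q) ^ m := pow_le_pow_left₀ hr0 h1 m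
      _ = Real.exp (-(m : ℝ) * q) := by
        rw [← Real.exp_nat_mul]; ring_nf
end
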